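/- arXiv:2503.06432 — 2 statements merged into one kernel-verified Lean document; each statement's English description precedes it below -/
import Mathlib

section
/- Let a ∈ ℝ and let 𝔔′ ⊆ 𝔓 be an intersecting subset such that B(α_P, α_Q) = a for all distinct P, Q ∈ 𝔔′. Then |𝔔′| ≤ |S| + 1. -/
/-!
Let `α_P` be the positive root of `P ∈ 𝔔′`; roots satisfy `B(α, α) = 1`.

If `a ≠ 1`, the roots `α_P` are affinely independent in `V`: pairing an affine relation
`∑ c_P α_P = 0` (with `∑ c_P = 0`) with `α_Q` leaves `(1 - a) c_Q = 0`. Hence there are at most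
`dim V + 1 = |S| + 1` of them.

If `a = 1` and `P ≠ P'`, put `δ = α_{P'} - α_P`, which is `B`-orthogonal to both roots. Then the
product of the two reflections maps `α_P + t δ` to `α_P + (t + 2) δ`, so the infinitely many roots
`α_P + 2 n δ` all vanish at a point `f ∈ P ⩀ P'`. This contradicts local finiteness: only finitely
many roots vanish at a point of `U°`. Local finiteness rests on the fact that every root is positive
or negative (proved by reduction to dihedral subgroups), which implies that each `w ∈ W` makes only
finitely many positive roots negative.
-/

noncomputable section

namespace PaperBound

variable {B : Type} {W : Type} [Group W]

/-- The value `B(α_i, α_j)` of the canonical symmetric bilinear form on simple roots: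
`-cos (π / m i j)` if `m i j ≠ ∞` (encoded as `M i j ≠ 0`) and `-1` otherwise. -/
def cB (M : CoxeterMatrix B) (i j : B) : ℝ :=
  if M i j = 0 then -1 else - Real.cos (Real.pi / (M i j : ℝ))

/-- The canonical symmetric bilinear form on `V = B → ℝ` (coordinates in the basis of
simple roots `Δ = {α_i}`). -/
def bform [Fintype B] (M : CoxeterMatrix B) (u v : B → ℝ) : ℝ :=
  ∑ i, ∑ j, u i * v j * cB M i j

/-- The natural pairing `⟨-,-⟩ : V* × V → ℝ`, where both `V` and `V*` are modelled as
`B → ℝ` (coordinates of `V*` taken in the dual basis of `Δ`). -/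
def pair [Fintype B] (f v : B → ℝ) : ℝ := ∑ i, f i * v i

/-- The simple root `α_i ∈ V`. -/
def sroot [DecidableEq B] (i : B) : B → ℝ := Pi.single i 1

/-- `ρ` is the geometric representation of `W` on `V = B → ℝ`:
`s_i · v = v - 2 B(α_i, v) α_i`. -/
def IsGeomRep [Fintype B] [DecidableEq B] (M : CoxeterMatrix B) (cs : CoxeterSystem M W)
    (ρ : W →* (B → ℝ) ≃ₗ[ℝ] (B → ℝ)) : Prop :=
  ∀ (i : B) (v : B → ℝ), ρ (cs.simple i) v = v - (2 * bform M (sroot i) v) • sroot i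

/-- `π` is the contragredient representation of `W` on `V* = B → ℝ`:
`⟨w·f, w·v⟩ = ⟨f, v⟩`. -/
def IsContraRep [Fintype B] (ρ : W →* (B → ℝ) ≃ₗ[ℝ] (B → ℝ))
    (π : W →* (B → ℝ) ≃ₗ[ℝ] (B → ℝ)) : Prop :=
  ∀ (w : W) (f v : B → ℝ), pair (π w f) (ρ w v) = pair f v

/-- The set `Φ⁺` of positive roots: roots (elements of the orbit of the simple roots)
all of whose coordinates in the basis `Δ` are nonnegative. -/
def PhiPos [Fintype B] [DecidableEq B] (ρ : W →* (B → ℝ) ≃ₗ[ℝ] (B → ℝ)) : Set (B → ℝ) :=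
  {α | (∃ (w : W) (i : B), α = ρ w (sroot i)) ∧ ∀ j, 0 ≤ α j}

/-- The hyperplane `H_α = {f ∈ V* : ⟨f, α⟩ = 0}`. -/
def hyp [Fintype B] (α : B → ℝ) : Set (B → ℝ) := {f | pair f α = 0}

/-- The set `𝔓 = {H_α : α ∈ Φ⁺}` of hyperplanes. -/
def Planes [Fintype B] [DecidableEq B] (ρ : W →* (B → ℝ) ≃ₗ[ℝ] (B → ℝ)) :
    Set (Set (B → ℝ)) :=
  {H | ∃ α ∈ PhiPos (W := W) ρ, H = hyp α}

/-- The (open) dominant chamber `C = {f ∈ V* : ⟨f, α_i⟩ > 0 for all i}`. -/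
def domCham (B : Type) [Fintype B] [DecidableEq B] : Set (B → ℝ) :=
  {f | ∀ i : B, 0 < pair f (sroot i)}

/-- The Tits cone `U = ⋃_{w ∈ W} w · (closure of C)`. -/
def titsCone [Fintype B] [DecidableEq B] (π : W →* (B → ℝ) ≃ₗ[ℝ] (B → ℝ)) :
    Set (B → ℝ) :=
  ⋃ w : W, (π w) '' closure (domCham B)

/-- `A ⩀ B := A ∩ B ∩ U°`, where `U°` is the interior of the Tits cone. -/
def dcap [Fintype B] [DecidableEq B] (π : W →* (B → ℝ) ≃ₗ[ℝ] (B → ℝ))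
    (A A' : Set (B → ℝ)) : Set (B → ℝ) :=
  A ∩ A' ∩ interior (titsCone π)

/-- A set `𝔔` of hyperplanes is intersecting if `H₁ ⩀ H₂ ≠ ∅` for all `H₁, H₂ ∈ 𝔔`. -/
def Intersecting [Fintype B] [DecidableEq B] (π : W →* (B → ℝ) ≃ₗ[ℝ] (B → ℝ))
    (Q : Set (Set (B → ℝ))) : Prop :=
  ∀ H₁ ∈ Q, ∀ H₂ ∈ Q, (dcap π H₁ H₂).Nonempty

/-- The chamber `wC ⊆ V*`. -/
def cham [Fintype B] [DecidableEq B] (π : W →* (B → ℝ) ≃ₗ[ℝ] (B → ℝ)) (w : W) :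
    Set (B → ℝ) :=
  (π w) '' domCham B

/-- The hyperplane with root `α` separates `f, g ∈ V*`: `⟨f, α⟩⟨g, α⟩ < 0`. -/
def SepPt [Fintype B] (α f g : B → ℝ) : Prop := pair f α * pair g α < 0

/-- The hyperplane with root `α` separates the subsets `A, A'` of `V*`: every point of
`A ∪ A'` lies off the hyperplane, and every point of `A` is separated from every point
of `A'`. -/
def SepSets [Fintype B] (α : B → ℝ) (A A' : Set (B → ℝ)) : Prop :=
  (∀ f ∈ A ∪ A', pair f α ≠ 0) ∧ ∀ f ∈ A, ∀ g ∈ A', SepPt α f g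

/-- The subset `A ⊆ V*` lies entirely on one side of the hyperplane with root `α`. -/
def OneSide [Fintype B] (α : B → ℝ) (A : Set (B → ℝ)) : Prop :=
  (∀ f ∈ A, pair f α ≠ 0) ∧ ∀ f ∈ A, ∀ g ∈ A, ¬ SepPt α f g

/-- The hyperplane `H ∈ 𝔓` separates the subsets `A, A'` of `V*` (expressed via a
positive root `α` with `H = H_α`; this does not depend on the choice of `α`). -/
def SepSetsH [Fintype B] [DecidableEq B] (ρ : W →* (B → ℝ) ≃ₗ[ℝ] (B → ℝ))
    (H : Set (B → ℝ)) (A A' : Set (B → ℝ)) : Prop :=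
  ∃ α ∈ PhiPos (W := W) ρ, H = hyp α ∧ SepSets α A A'


/-- The open half-space bounded by the hyperplane with root `α` on the side not containing
the chamber `wC`. -/
def halfNeg [Fintype B] [DecidableEq B] (π : W →* (B → ℝ) ≃ₗ[ℝ] (B → ℝ)) (w : W)
    (α : B → ℝ) : Set (B → ℝ) :=
  {f | ∀ f₀ ∈ cham π w, pair f α * pair f₀ α < 0}

/-- Auxiliary recursion producing the sets `𝔄_i` (first component) together with the
cumulative unions `𝔄₀ ∪ ⋯ ∪ 𝔄_i` (second component), starting from `𝔄₀ = A0`: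
`𝔄_{i+1} = {P ∈ Q ∖ (𝔄₀ ∪ ⋯ ∪ 𝔄_i) : P ⩀ σ(R) = ∅ for some R ∈ 𝔄_i}`. -/
def AseqAux [Fintype B] [DecidableEq B] (π : W →* (B → ℝ) ≃ₗ[ℝ] (B → ℝ))
    (Q : Set (Set (B → ℝ))) (σ : W) (A0 : Set (Set (B → ℝ))) :
    ℕ → Set (Set (B → ℝ)) × Set (Set (B → ℝ))
  | 0 => (A0, A0)
  | i + 1 =>
    let prev := AseqAux π Q σ A0 i
    ({P | P ∈ Q ∧ P ∉ prev.2 ∧ ∃ R ∈ prev.1, dcap π P ((π σ) '' R) = ∅},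
      prev.2 ∪ {P | P ∈ Q ∧ P ∉ prev.2 ∧ ∃ R ∈ prev.1, dcap π P ((π σ) '' R) = ∅})

/-- The set `𝔄_i`. -/
def Aseq [Fintype B] [DecidableEq B] (π : W →* (B → ℝ) ≃ₗ[ℝ] (B → ℝ))
    (Q : Set (Set (B → ℝ))) (σ : W) (A0 : Set (Set (B → ℝ))) (i : ℕ) :
    Set (Set (B → ℝ)) :=
  (AseqAux π Q σ A0 i).1

section Words

variable {M : CoxeterMatrix B}

/-- The element `x′_n = x s₁ ⋯ ŝ_{i₁} ⋯ ŝ_{i_{n−1}} ⋯ s_{i_n − 1}`: the product of `x` and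
the first `i_n - 1` letters of the word `ω`, with the letters at positions `i₁, …, i_{n−1}`
omitted. (Positions are recorded `0`-based: the index `ι n : Fin ω.length` corresponds to
the letter `s_{i_{n+1}}` of the paper.) -/
def omitProd (cs : CoxeterSystem M W) (x : W) (ω : List B) {p : ℕ}
    (ι : Fin p → Fin ω.length) (n : Fin p) : W :=
  x * cs.wordProd (((List.finRange ω.length).filter
      (fun j : Fin ω.length => decide ((j : ℕ) < (ι n : ℕ) ∧ ∀ m : Fin p, m < n → j ≠ ι m))).map ω.get)

/-- The condition `ℓ(x′_n s_{i_n}) < ℓ(x′_n)` for all `n = 1, …, p`. -/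
def DescCond (cs : CoxeterSystem M W) (x : W) (ω : List B) {p : ℕ}
    (ι : Fin p → Fin ω.length) : Prop :=
  ∀ n : Fin p, cs.length (omitProd cs x ω ι n * cs.simple (ω.get (ι n))) <
    cs.length (omitProd cs x ω ι n)

/-- The element `x_n := x s₁ ⋯ s_{i_n − 1}`. -/
def xseq (cs : CoxeterSystem M W) (x : W) (ω : List B) {p : ℕ}
    (ι : Fin p → Fin ω.length) (n : Fin p) : W :=
  x * cs.wordProd (ω.take (ι n))

/-- The reflection `σ_n := x_n s_{i_n} x_n⁻¹`. -/
def sigmaseq (cs : CoxeterSystem M W) (x : W) (ω : List B) {p : ℕ}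
    (ι : Fin p → Fin ω.length) (n : Fin p) : W :=
  xseq cs x ω ι n * cs.simple (ω.get (ι n)) * (xseq cs x ω ι n)⁻¹

/-- The element `e_n := σ_n σ_{n−1} ⋯ σ₁`, with `e₀ = e`. -/
def eseq (cs : CoxeterSystem M W) (x : W) (ω : List B) {p : ℕ}
    (ι : Fin p → Fin ω.length) : ℕ → W
  | 0 => 1
  | n + 1 => (if h : n < p then sigmaseq cs x ω ι ⟨n, h⟩ else 1) * eseq cs x ω ι n

/-- A root of the hyperplane `H_n` corresponding to the reflection `σ_n`, namely
`x_n · α_{s_{i_n}}`. -/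
def rootseq [Fintype B] [DecidableEq B] (cs : CoxeterSystem M W)
    (ρ : W →* (B → ℝ) ≃ₗ[ℝ] (B → ℝ)) (x : W) (ω : List B) {p : ℕ}
    (ι : Fin p → Fin ω.length) (n : Fin p) : B → ℝ :=
  ρ (xseq cs x ω ι n) (sroot (ω.get (ι n)))

/-- The hyperplane `H_n ∈ 𝔓` corresponding to the reflection `σ_n`. -/
def Hseq [Fintype B] [DecidableEq B] (cs : CoxeterSystem M W)
    (ρ : W →* (B → ℝ) ≃ₗ[ℝ] (B → ℝ)) (x : W) (ω : List B) {p : ℕ}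
    (ι : Fin p → Fin ω.length) (n : Fin p) : Set (B → ℝ) :=
  hyp (rootseq cs ρ x ω ι n)

end Words

theorem affineIndependent_of_bilin_eq {K V : Type*} [Field K] [AddCommGroup V] [Module K V]
    (Bf : LinearMap.BilinForm K V) {s : Set V} {a b : K} (hab : a ≠ b)
    (hdiag : ∀ x ∈ s, Bf x x = b) (hoff : ∀ x ∈ s, ∀ y ∈ s, x ≠ y → Bf x y = a) :
    AffineIndependent K ((↑) : s → V) := by
  classical
  rw [affineIndependent_iff]
  intro t c hc hsum x hx
  have hBx : ∀ y : s, Bf x y = a + if y = x then b - a else 0 := by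
    intro y
    split_ifs with h
    · rw [h, hdiag x x.2]; ring
    · rw [hoff x x.2 y y.2 fun e => h (Subtype.ext e.symm)]; ring
  have h := congrArg (Bf x) hsum
  simp only [map_sum, map_smul, map_zero, smul_eq_mul, hBx, mul_add, Finset.sum_add_distrib,
    ← Finset.sum_mul, hc, zero_mul, zero_add, mul_ite, mul_zero, Finset.sum_ite_eq',
    if_pos hx] at h
  exact (mul_eq_zero.mp h).resolve_right (sub_ne_zero.mpr hab.symm)

theorem finite_and_ncard_le_of_bilin_eq {K V : Type*} [Field K] [AddCommGroup V] [Module K V]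
    [FiniteDimensional K V] (Bf : LinearMap.BilinForm K V) {s : Set V} {a b : K} (hab : a ≠ b)
    (hdiag : ∀ x ∈ s, Bf x x = b) (hoff : ∀ x ∈ s, ∀ y ∈ s, x ≠ y → Bf x y = a) :
    s.Finite ∧ s.ncard ≤ Module.finrank K V + 1 := by
  have hind := affineIndependent_of_bilin_eq Bf hab hdiag hoff
  have hfin : s.Finite := finite_set_of_fin_dim_affineIndependent K hind
  have := hfin.fintype
  refine ⟨hfin, ?_⟩
  calc s.ncard = Fintype.card s := by rw [← Nat.card_coe_set_eq, Nat.card_eq_fintype_card]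
    _ ≤ Module.finrank K (vectorSpan K (Set.range ((↑) : s → V))) + 1 :=
      hind.card_le_finrank_succ
    _ ≤ Module.finrank K V + 1 := by gcongr; exact Submodule.finrank_le _

section Form

variable {M : CoxeterMatrix B}

lemma cB_comm (i j : B) : cB M i j = cB M j i := by rw [cB, cB, M.symmetric]

lemma cB_self (i : B) : cB M i i = 1 := by simp [cB]

lemma sroot_nonneg [DecidableEq B] (i : B) : 0 ≤ sroot (B := B) i :=
  Pi.single_nonneg.mpr zero_le_one

lemma pair_eq_dotProduct [Fintype B] (f v : B → ℝ) : pair f v = f ⬝ᵥ v := rfl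

lemma bform_comm [Fintype B] (u v : B → ℝ) : bform M u v = bform M v u := by
  rw [bform, bform, Finset.sum_comm]
  refine Finset.sum_congr rfl fun i _ => Finset.sum_congr rfl fun j _ => ?_
  rw [cB_comm]; ring

variable [Fintype B] [DecidableEq B]

lemma pair_sroot (f : B → ℝ) (i : B) : pair f (sroot i) = f i := by
  rw [pair_eq_dotProduct, sroot, dotProduct_single, mul_one]

variable (M) in
def bformBilin : LinearMap.BilinForm ℝ (B → ℝ) := Matrix.toBilin' (Matrix.of (cB M))

lemma bformBilin_apply (u v : B → ℝ) : bformBilin M u v = bform M u v := by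
  simp only [bformBilin, Matrix.toBilin'_apply, Matrix.of_apply, bform, mul_right_comm]

lemma bform_sroot_sroot (i j : B) : bform M (sroot i) (sroot j) = cB M i j := by
  rw [← bformBilin_apply, bformBilin, sroot, sroot, Matrix.toBilin'_single, Matrix.of_apply]

lemma bform_add_right (u v w : B → ℝ) : bform M u (v + w) = bform M u v + bform M u w := by
  simp only [← bformBilin_apply, map_add]

lemma bform_sub_right (u v w : B → ℝ) : bform M u (v - w) = bform M u v - bform M u w := by
  simp only [← bformBilin_apply, map_sub]

lemma bform_smul_right (u : B → ℝ) (c : ℝ) (v : B → ℝ) :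
    bform M u (c • v) = c * bform M u v := by
  simp only [← bformBilin_apply, map_smul, smul_eq_mul]

lemma bform_sub_left (u v w : B → ℝ) : bform M (u - v) w = bform M u w - bform M v w := by
  simp only [← bformBilin_apply, map_sub, LinearMap.sub_apply]

lemma bform_smul_left (c : ℝ) (u v : B → ℝ) : bform M (c • u) v = c * bform M u v := by
  simp only [← bformBilin_apply, map_smul, LinearMap.smul_apply, smul_eq_mul]

end Form

section Representation

variable {G R V : Type*} [Group G] [Semiring R] [AddCommMonoid V] [Module R V]

lemma rep_mul_apply (ρ : G →* V ≃ₗ[R] V) (g h : G) (v : V) : ρ (g * h) v = ρ g (ρ h v) := by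
  rw [map_mul, LinearEquiv.mul_apply]

lemma rep_one_apply (ρ : G →* V ≃ₗ[R] V) (v : V) : ρ 1 v = v := by
  rw [map_one]; rfl

lemma rep_apply_inv_apply (ρ : G →* V ≃ₗ[R] V) (g : G) (v : V) : ρ g (ρ g⁻¹ v) = v := by
  rw [← rep_mul_apply, mul_inv_cancel, rep_one_apply]

lemma rep_inv_apply_apply (ρ : G →* V ≃ₗ[R] V) (g : G) (v : V) : ρ g⁻¹ (ρ g v) = v := by
  rw [← rep_mul_apply, inv_mul_cancel, rep_one_apply]

end Representation

section GeomRep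

variable [DecidableEq B] {ρ : W →* (B → ℝ) ≃ₗ[ℝ] (B → ℝ)}

def roots (ρ : W →* (B → ℝ) ≃ₗ[ℝ] (B → ℝ)) : Set (B → ℝ) :=
  {γ | ∃ (w : W) (i : B), γ = ρ w (sroot i)}

lemma rep_mem_roots {γ : B → ℝ} (hγ : γ ∈ roots ρ) (w : W) : ρ w γ ∈ roots ρ := by
  obtain ⟨x, i, rfl⟩ := hγ
  exact ⟨w * x, i, (rep_mul_apply ρ w x _).symm⟩

variable [Fintype B] {M : CoxeterMatrix B} {cs : CoxeterSystem M W}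

variable (hρ : IsGeomRep M cs ρ)
include hρ

lemma rho_simple_sroot (i j : B) :
    ρ (cs.simple i) (sroot j) = sroot j - (2 * cB M i j) • sroot i := by
  rw [hρ, bform_sroot_sroot]

lemma rho_simple_sroot_self (i : B) : ρ (cs.simple i) (sroot i) = -sroot i := by
  rw [rho_simple_sroot hρ, cB_self]
  module

lemma bform_rho (w : W) (u v : B → ℝ) : bform M (ρ w u) (ρ w v) = bform M u v := by
  induction w using cs.simple_induction_left with
  | one => rw [rep_one_apply, rep_one_apply]
  | mul_simple_left w i ih =>
    rw [rep_mul_apply, rep_mul_apply, hρ i, hρ i, ← ih]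
    simp only [bform_sub_left, bform_sub_right, bform_smul_left, bform_smul_right,
      bform_sroot_sroot, cB_self, bform_comm (sroot i)]
    ring

lemma neg_mem_roots {γ : B → ℝ} (hγ : γ ∈ roots ρ) : -γ ∈ roots ρ := by
  obtain ⟨w, i, rfl⟩ := hγ
  exact ⟨w * cs.simple i, i, by rw [rep_mul_apply, rho_simple_sroot_self hρ, map_neg]⟩

lemma bform_self_of_mem_roots {γ : B → ℝ} (hγ : γ ∈ roots ρ) : bform M γ γ = 1 := by
  obtain ⟨w, i, rfl⟩ := hγ
  rw [bform_rho hρ, bform_sroot_sroot, cB_self]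

lemma ne_zero_of_mem_roots {γ : B → ℝ} (hγ : γ ∈ roots ρ) : γ ≠ 0 := by
  rintro rfl
  simpa [← bformBilin_apply] using bform_self_of_mem_roots hρ hγ

lemma exists_reflection {γ : B → ℝ} (hγ : γ ∈ roots ρ) :
    ∃ r : W, ∀ v, ρ r v = v - (2 * bform M γ v) • γ := by
  obtain ⟨x, i, rfl⟩ := hγ
  refine ⟨x * cs.simple i * x⁻¹, fun v => ?_⟩
  rw [rep_mul_apply, rep_mul_apply, hρ, map_sub, map_smul, rep_apply_inv_apply,
    ← bform_rho hρ x, rep_apply_inv_apply]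

end GeomRep

section Words

open CoxeterSystem

variable {M : CoxeterMatrix B} (cs : CoxeterSystem M W)

lemma exists_factorization_ascents {i j : B} (v : W) (ω : List B)
    (hω : ∀ l ∈ ω, l = i ∨ l = j)
    (hlen : cs.length (v * cs.wordProd ω) = cs.length v + ω.length) :
    ∃ v' ω', (∀ l ∈ ω', l = i ∨ l = j) ∧ v' * cs.wordProd ω' = v * cs.wordProd ω ∧
      cs.length (v * cs.wordProd ω) = cs.length v' + ω'.length ∧
      cs.length v' ≤ cs.length v ∧ cs.length v' < cs.length (v' * cs.simple i) ∧
      cs.length v' < cs.length (v' * cs.simple j) := by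
  induction hn : cs.length v using Nat.strong_induction_on generalizing v ω with
  | _ n ih =>
  by_cases hdesc : ∃ t, (t = i ∨ t = j) ∧ cs.length (v * cs.simple t) < cs.length v
  · obtain ⟨t, ht, hlt⟩ := hdesc
    have hdrop : cs.length (v * cs.simple t) + 1 = cs.length v :=
      (cs.length_mul_simple v t).resolve_left (by omega)
    have hprod : v * cs.simple t * cs.wordProd (t :: ω) = v * cs.wordProd ω := by
      rw [cs.wordProd_cons, mul_assoc, cs.simple_mul_simple_cancel_left]
    obtain ⟨v', ω', hω', hprod', hlen', hle, hvi, hvj⟩ :=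
      ih _ (hn ▸ hlt) (v * cs.simple t) (t :: ω)
        (List.forall_mem_cons.mpr ⟨ht, hω⟩) (by rw [hprod, List.length_cons]; omega) rfl
    exact ⟨v', ω', hω', hprod'.trans hprod, hprod ▸ hlen', by omega, hvi, hvj⟩
  · push Not at hdesc
    have hasc : ∀ t, (t = i ∨ t = j) → cs.length v < cs.length (v * cs.simple t) :=
      fun t ht => lt_of_le_of_ne (hdesc t ht) (cs.length_mul_simple_ne v t).symm
    exact ⟨v, ω, hω, rfl, hlen, hn.le, hasc i (.inl rfl), hasc j (.inr rfl)⟩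

lemma not_isReduced_concat_concat (ω : List B) (t : B) :
    ¬ cs.IsReduced ((ω.concat t).concat t) := by
  intro h
  have hprod : cs.wordProd ((ω.concat t).concat t) = cs.wordProd ω := by
    rw [cs.wordProd_concat, cs.wordProd_concat, cs.simple_mul_simple_cancel_right]
  have := cs.length_wordProd_le ω
  rw [CoxeterSystem.IsReduced, hprod] at h
  simp only [List.concat_eq_append, List.length_append, List.length_singleton] at h
  omega

lemma isReduced_concat_alternatingWord {a b x : B} {n : ℕ} (hx : x = a ∨ x = b)
    (hred : cs.IsReduced ((alternatingWord a b n).concat x)) :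
    ∃ m, (alternatingWord a b n).concat x = alternatingWord a b m ∨
      (alternatingWord a b n).concat x = alternatingWord b a m := by
  rcases hx with rfl | rfl
  · exact ⟨n + 1, .inr rfl⟩
  · cases n with
    | zero => exact ⟨1, .inl rfl⟩
    | succ k => exact absurd hred (not_isReduced_concat_concat cs _ _)

theorem exists_eq_alternatingWord_of_isReduced {i j : B} {ω : List B}
    (hω : ∀ l ∈ ω, l = i ∨ l = j) (hred : cs.IsReduced ω) :
    ∃ n, ω = alternatingWord i j n ∨ ω = alternatingWord j i n := by
  induction ω using List.reverseRecOn with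
  | nil => exact ⟨0, .inl rfl⟩
  | append_singleton ω x ih =>
    have hω' : ∀ l ∈ ω, l = i ∨ l = j := fun l hl => hω l (List.mem_append_left _ hl)
    have hx : x = i ∨ x = j := hω x (List.mem_append_right _ (List.mem_singleton_self x))
    have hred' : cs.IsReduced ω := by simpa using hred.take ω.length
    rw [← List.concat_eq_append] at hred ⊢
    obtain ⟨n, rfl | rfl⟩ := ih hω' hred'
    · exact isReduced_concat_alternatingWord cs hx hred
    · obtain ⟨m, hm⟩ := isReduced_concat_alternatingWord cs hx.symm hred
      exact ⟨m, hm.symm⟩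

lemma wordProd_alternatingWord_succ_mul_simple (i j : B) (n : ℕ) :
    cs.wordProd (alternatingWord j i (n + 1)) * cs.simple i =
      cs.wordProd (alternatingWord i j n) := by
  rw [alternatingWord_succ, cs.wordProd_concat, cs.simple_mul_simple_cancel_right]

theorem eq_alternatingWord_of_isReduced_of_lt {i j : B} {ω : List B}
    (hω : ∀ l ∈ ω, l = i ∨ l = j) (hred : cs.IsReduced ω)
    (hasc : cs.length (cs.wordProd ω) < cs.length (cs.wordProd ω * cs.simple i)) :
    ω = alternatingWord i j ω.length ∧ (M i j = 0 ∨ ω.length < M i j) := by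
  -- a reduced word for `cs.wordProd ω` ending in `i` would make `i` a right descent
  have hnot : ∀ n, ω.length = n + 1 →
      cs.wordProd ω ≠ cs.wordProd (alternatingWord j i (n + 1)) := by
    intro n hn h
    have hle := cs.length_wordProd_le (alternatingWord i j n)
    rw [← wordProd_alternatingWord_succ_mul_simple cs i j n, ← h, length_alternatingWord] at hle
    have := hred.eq
    omega
  obtain ⟨n, hn⟩ := exists_eq_alternatingWord_of_isReduced cs hω hred
  have hA : ω = alternatingWord i j ω.length := by
    rcases hn with rfl | rfl
    · rw [length_alternatingWord]
    · cases n with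
      | zero => rfl
      | succ k => exact absurd rfl (hnot k (length_alternatingWord _ _ _))
  refine ⟨hA, ?_⟩
  by_contra hM
  push Not at hM
  obtain ⟨hM0, hMle⟩ := hM
  rcases hMle.lt_or_eq with hlt | heq
  · exact cs.not_isReduced_alternatingWord i j hM0 hlt (hA ▸ hred)
  · obtain ⟨k, hk⟩ := Nat.exists_eq_succ_of_ne_zero hM0
    refine hnot k (by omega) ?_
    have hbraid := cs.wordProd_braidWord_eq i j
    rw [braidWord, braidWord, M.symmetric j i, heq] at hbraid
    rw [hA, hbraid, show ω.length = k + 1 by omega]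

lemma isReduced_and_lt_of_length_mul_eq {v : W} {ω : List B} {i : B}
    (hlen : cs.length (v * cs.wordProd ω) = cs.length v + ω.length)
    (hasc : cs.length (v * cs.wordProd ω) < cs.length (v * cs.wordProd ω * cs.simple i)) :
    cs.IsReduced ω ∧ cs.length (cs.wordProd ω) < cs.length (cs.wordProd ω * cs.simple i) := by
  have h₁ := cs.length_wordProd_le ω
  have h₂ := cs.length_mul_le v (cs.wordProd ω)
  have h₃ := cs.length_mul_le v (cs.wordProd ω * cs.simple i)
  have h₄ := cs.length_mul_simple (cs.wordProd ω) i
  rw [← mul_assoc] at h₃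
  exact ⟨by unfold CoxeterSystem.IsReduced; omega, by omega⟩

end Words

section Dihedral

open CoxeterSystem Polynomial Polynomial.Chebyshev

lemma chebyshev_U_eval_cos_nonneg {m : ℕ} (hm : 2 ≤ m) {k : ℤ} (hk₀ : -1 ≤ k)
    (hk : k + 1 ≤ m) : 0 ≤ (U ℝ k).eval (Real.cos (Real.pi / m)) := by
  have hm' : (2 : ℝ) ≤ m := by exact_mod_cast hm
  have hθ : 0 < Real.pi / m := by positivity
  have hsin : 0 < Real.sin (Real.pi / m) :=
    Real.sin_pos_of_pos_of_lt_pi hθ (div_lt_self Real.pi_pos (by linarith))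
  have hk₀' : (0 : ℝ) ≤ k + 1 := by exact_mod_cast (by omega : (0 : ℤ) ≤ k + 1)
  have hk' : (k : ℝ) + 1 ≤ m := by exact_mod_cast hk
  refine nonneg_of_mul_nonneg_left ?_ hsin
  rw [U_real_cos]
  refine Real.sin_nonneg_of_nonneg_of_le_pi (by positivity) ?_
  calc ((k : ℝ) + 1) * (Real.pi / m) ≤ m * (Real.pi / m) := by gcongr
    _ = Real.pi := by field_simp

variable {M : CoxeterMatrix B}

lemma chebyshev_U_eval_neg_cB_nonneg {i j : B} (hij : i ≠ j) {k : ℤ} (hk₀ : -1 ≤ k)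
    (hk : M i j = 0 ∨ k + 1 ≤ M i j) : 0 ≤ (U ℝ k).eval (-cB M i j) := by
  by_cases hM : M i j = 0
  · rw [cB, if_pos hM, neg_neg, U_eval_one]
    exact_mod_cast (by omega : (0 : ℤ) ≤ k + 1)
  · rw [cB, if_neg hM, neg_neg]
    have := M.off_diagonal i j hij
    exact chebyshev_U_eval_cos_nonneg (by omega) hk₀ (hk.resolve_left hM)

variable [Fintype B] [DecidableEq B] {cs : CoxeterSystem M W}
  {ρ : W →* (B → ℝ) ≃ₗ[ℝ] (B → ℝ)} (hρ : IsGeomRep M cs ρ)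
include hρ

-- `n - 1` is an integer here, and `U ℝ (-1) = 0`.
lemma rho_alternatingWord (i j : B) (n : ℕ) :
    ρ (cs.wordProd (alternatingWord i j n)) (sroot i) =
      if Even n then
        (U ℝ n).eval (-cB M i j) • sroot i + (U ℝ (n - 1)).eval (-cB M i j) • sroot j
      else
        (U ℝ n).eval (-cB M i j) • sroot j + (U ℝ (n - 1)).eval (-cB M i j) • sroot i := by
  induction n with
  | zero => simp [alternatingWord]
  | succ n ih =>
    have hU : (U ℝ ((n + 1 : ℕ) : ℤ)).eval (-cB M i j) =
        2 * (-cB M i j) * (U ℝ n).eval (-cB M i j) - (U ℝ (n - 1)).eval (-cB M i j) := by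
      rw [Nat.cast_succ, U_add_one]; simp
    rw [alternatingWord_succ', cs.wordProd_cons, rep_mul_apply, ih, hU,
      show ((n + 1 : ℕ) : ℤ) - 1 = n by omega]
    by_cases hn : Even n
    · rw [if_pos hn, if_pos hn, if_neg (Nat.not_even_iff_odd.mpr hn.add_one), map_add,
        map_smul, map_smul, rho_simple_sroot_self hρ, rho_simple_sroot hρ, cB_comm j i]
      module
    · rw [if_neg hn, if_neg hn, if_pos (Nat.not_even_iff_odd.mp hn).add_one, map_add,
        map_smul, map_smul, rho_simple_sroot_self hρ, rho_simple_sroot hρ]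
      module

lemma exists_nonneg_rho_alternatingWord {i j : B} (hij : i ≠ j) {n : ℕ}
    (hn : M i j = 0 ∨ n < M i j) :
    ∃ p q : ℝ, 0 ≤ p ∧ 0 ≤ q ∧
      ρ (cs.wordProd (alternatingWord i j n)) (sroot i) = p • sroot i + q • sroot j := by
  have h₁ : 0 ≤ (U ℝ n).eval (-cB M i j) :=
    chebyshev_U_eval_neg_cB_nonneg hij (by omega) (by omega)
  have h₂ : 0 ≤ (U ℝ (n - 1)).eval (-cB M i j) :=
    chebyshev_U_eval_neg_cB_nonneg hij (by omega) (by omega)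
  rw [rho_alternatingWord hρ]
  split_ifs
  · exact ⟨_, _, h₁, h₂, rfl⟩
  · exact ⟨_, _, h₂, h₁, add_comm _ _⟩

end Dihedral

section Positivity

variable [Fintype B] [DecidableEq B] {M : CoxeterMatrix B} {cs : CoxeterSystem M W}
  {ρ : W →* (B → ℝ) ≃ₗ[ℝ] (B → ℝ)} (hρ : IsGeomRep M cs ρ)
include hρ

theorem nonneg_rho_sroot_of_length_lt (w : W) (i : B)
    (h : cs.length w < cs.length (w * cs.simple i)) : 0 ≤ ρ w (sroot i) := by
  -- Write `w = v u` with `u` in the dihedral subgroup of a right descent `s_j` and `v` as short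
  -- as possible; then `v` has ascents at `i` and `j`, and `u α_i ∈ ℝ≥0 α_i + ℝ≥0 α_j`.
  induction hn : cs.length w using Nat.strong_induction_on generalizing w i with
  | _ n ih =>
  rcases eq_or_ne w 1 with rfl | hw
  · rw [rep_one_apply]; exact sroot_nonneg i
  obtain ⟨j, hj⟩ := cs.exists_rightDescent_of_ne_one hw
  rw [CoxeterSystem.IsRightDescent] at hj
  have hij : i ≠ j := by rintro rfl; exact lt_asymm h hj
  have hwj : w * cs.simple j * cs.wordProd [j] = w := by
    rw [cs.wordProd_singleton, cs.simple_mul_simple_cancel_right]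
  obtain ⟨v, ω, hω, hvω, hlen, hle, hvi, hvj⟩ :=
    exists_factorization_ascents cs (i := i) (j := j) (w * cs.simple j) [j] (by simp)
      (by rw [hwj, List.length_singleton]; have := cs.length_mul_simple w j; omega)
  rw [hwj] at hvω hlen
  obtain ⟨hred, hasc⟩ := isReduced_and_lt_of_length_mul_eq cs (hvω ▸ hlen) (hvω ▸ h)
  obtain ⟨hA, hM⟩ := eq_alternatingWord_of_isReduced_of_lt cs hω hred hasc
  obtain ⟨p, q, hp, hq, hpq⟩ := exists_nonneg_rho_alternatingWord hρ hij hM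
  rw [← hvω, rep_mul_apply, hA, hpq, map_add, map_smul, map_smul]
  exact add_nonneg (smul_nonneg hp (ih _ (by omega) v i hvi rfl))
    (smul_nonneg hq (ih _ (by omega) v j hvj rfl))

theorem nonneg_or_nonpos_of_mem_roots {γ : B → ℝ} (hγ : γ ∈ roots ρ) : 0 ≤ γ ∨ γ ≤ 0 := by
  obtain ⟨w, i, rfl⟩ := hγ
  rcases (cs.length_mul_simple w i) with h | h
  · exact .inl (nonneg_rho_sroot_of_length_lt hρ w i (by omega))
  · have := nonneg_rho_sroot_of_length_lt hρ (w * cs.simple i) i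
      (by rw [cs.simple_mul_simple_cancel_right]; omega)
    rw [rep_mul_apply, rho_simple_sroot_self hρ, map_neg, neg_nonneg] at this
    exact .inr this

end Positivity

section LocalFiniteness

variable [Fintype B] [DecidableEq B] {M : CoxeterMatrix B} {cs : CoxeterSystem M W}
  {ρ : W →* (B → ℝ) ≃ₗ[ℝ] (B → ℝ)}

lemma nonneg_of_mem_closure_domCham {h : B → ℝ} (hh : h ∈ closure (domCham B)) : 0 ≤ h :=
  closure_minimal (fun f hf i => (pair_sroot f i ▸ hf i).le) isClosed_Ici hh

variable (hρ : IsGeomRep M cs ρ)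
include hρ

lemma eq_sroot_of_not_nonneg_rho_simple {γ : B → ℝ} (hγ : γ ∈ PhiPos ρ) {i : B}
    (h : ¬ 0 ≤ ρ (cs.simple i) γ) : γ = sroot i := by
  obtain ⟨hroot, hnn⟩ := hγ
  have hnp : ρ (cs.simple i) γ ≤ 0 :=
    (nonneg_or_nonpos_of_mem_roots hρ (rep_mem_roots hroot _)).resolve_left h
  have hsupp : γ = γ i • sroot i := by
    funext k
    by_cases hk : k = i
    · subst hk; simp [sroot]
    · have := hnp k
      rw [hρ] at this
      simp only [sroot, Pi.sub_apply, Pi.smul_apply, Pi.single_apply, hk, if_false,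
        smul_eq_mul, mul_zero, sub_zero, Pi.zero_apply] at this ⊢
      exact le_antisymm this (hnn k)
  have hnorm := bform_self_of_mem_roots hρ hroot
  rw [hsupp, bform_smul_left, bform_smul_right, bform_sroot_sroot, cB_self, mul_one] at hnorm
  have : γ i = 1 := by nlinarith [hnn i]
  rw [hsupp, this, one_smul]

theorem finite_phiPos_not_nonneg_rho (w : W) : {γ ∈ PhiPos ρ | ¬ 0 ≤ ρ w γ}.Finite := by
  induction w using cs.simple_induction_left with
  | one =>
    refine Set.finite_empty.subset fun γ ⟨hγ, hneg⟩ => hneg ?_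
    rw [rep_one_apply]
    exact hγ.2
  | mul_simple_left w i ih =>
    refine (ih.insert (ρ w⁻¹ (sroot i))).subset ?_
    rintro γ ⟨hγ, hneg⟩
    by_cases hw : 0 ≤ ρ w γ
    · rw [rep_mul_apply] at hneg
      left
      rw [← eq_sroot_of_not_nonneg_rho_simple hρ ⟨rep_mem_roots hγ.1 w, hw⟩ hneg,
        rep_inv_apply_apply]
    · exact .inr ⟨hγ, hw⟩

theorem finite_phiPos_pair_eq_zero (π : W →* (B → ℝ) ≃ₗ[ℝ] (B → ℝ)) (hπ : IsContraRep ρ π)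
    {f : B → ℝ} (hf : f ∈ interior (titsCone π)) : {γ ∈ PhiPos ρ | pair f γ = 0}.Finite := by
  -- Write the nearby point `f - (ε/2) 𝟙 ∈ U` as `w h` with `h ∈ closure C`: a positive root
  -- vanishing at `f` is negative at `w h`, so `w⁻¹` makes it non-positive.
  obtain ⟨ε, hε, hball⟩ := Metric.mem_nhds_iff.mp (mem_interior_iff_mem_nhds.mp hf)
  have hε' : 0 ≤ ε / 2 := by positivity
  have hf' : f - (ε / 2) • 1 ∈ titsCone π := by
    refine hball (lt_of_le_of_lt ((dist_pi_le_iff hε').mpr fun b => ?_) (half_lt_self hε))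
    simp [abs_of_pos hε]
  obtain ⟨w, h, hh, hwh⟩ := Set.mem_iUnion.mp hf'
  refine (finite_phiPos_not_nonneg_rho hρ w⁻¹).subset ?_
  rintro γ ⟨hγ, hfγ⟩
  refine ⟨hγ, fun hnn => ?_⟩
  have hsum : 0 < ∑ k, γ k := by
    obtain ⟨k, hk⟩ := Function.ne_iff.mp (ne_zero_of_mem_roots hρ hγ.1)
    exact Finset.sum_pos' (fun k _ => hγ.2 k)
      ⟨k, Finset.mem_univ k, lt_of_le_of_ne (hγ.2 k) hk.symm⟩
  have hpair : pair (f - (ε / 2) • 1) γ = -(ε / 2 * ∑ k, γ k) := by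
    simp only [pair_eq_dotProduct, sub_dotProduct, smul_dotProduct, one_dotProduct, smul_eq_mul]
    rw [← pair_eq_dotProduct, hfγ, zero_sub]
  have hh' : 0 ≤ pair h (ρ w⁻¹ γ) :=
    dotProduct_nonneg_of_nonneg (nonneg_of_mem_closure_domCham hh) hnn
  rw [← hπ w h, rep_apply_inv_apply, hwh, hpair] at hh'
  nlinarith

theorem finite_roots_pair_eq_zero (π : W →* (B → ℝ) ≃ₗ[ℝ] (B → ℝ)) (hπ : IsContraRep ρ π)
    {f : B → ℝ} (hf : f ∈ interior (titsCone π)) : {γ ∈ roots ρ | pair f γ = 0}.Finite := by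
  have hS := finite_phiPos_pair_eq_zero hρ π hπ hf
  refine (hS.union (hS.preimage neg_injective.injOn)).subset ?_
  rintro γ ⟨hγ, hfγ⟩
  rcases nonneg_or_nonpos_of_mem_roots hρ hγ with h | h
  · exact .inl ⟨⟨hγ, h⟩, hfγ⟩
  · refine .inr ⟨⟨neg_mem_roots hρ hγ, neg_nonneg.mpr h⟩, ?_⟩
    rw [pair_eq_dotProduct, dotProduct_neg, ← pair_eq_dotProduct, hfγ, neg_zero]

theorem not_dcap_nonempty_of_bform_eq_one (π : W →* (B → ℝ) ≃ₗ[ℝ] (B → ℝ))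
    (hπ : IsContraRep ρ π) {α β : B → ℝ} (hα : α ∈ roots ρ) (hβ : β ∈ roots ρ) (hne : α ≠ β)
    (hαβ : bform M α β = 1) : ¬ (dcap π (hyp α) (hyp β)).Nonempty := by
  rintro ⟨f, ⟨hfα, hfβ⟩, hf⟩
  obtain ⟨rα, hrα⟩ := exists_reflection hρ hα
  obtain ⟨rβ, hrβ⟩ := exists_reflection hρ hβ
  have hαα := bform_self_of_mem_roots hρ hα
  have hββ := bform_self_of_mem_roots hρ hβ
  have hβα : bform M β α = 1 := bform_comm β α ▸ hαβ
  have hstep : ∀ t : ℝ, ρ (rβ * rα) (α + t • (β - α)) = α + (t + 2) • (β - α) := by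
    intro t
    rw [rep_mul_apply, hrα, hrβ]
    simp only [bform_add_right, bform_sub_right, bform_smul_right, hαα, hαβ, hββ, hβα]
    module
  have horbit : ∀ n : ℕ, ρ ((rβ * rα) ^ n) α = α + (2 * n : ℝ) • (β - α) := by
    intro n
    induction n with
    | zero => simp
    | succ n ih =>
      rw [pow_succ', rep_mul_apply, ih, hstep]
      push_cast
      module
  have hmem : ∀ n : ℕ, α + (2 * n : ℝ) • (β - α) ∈ {γ ∈ roots ρ | pair f γ = 0} := by
    intro n
    refine ⟨horbit n ▸ rep_mem_roots hα _, ?_⟩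
    have hfα' : f ⬝ᵥ α = 0 := hfα
    have hfβ' : f ⬝ᵥ β = 0 := hfβ
    simp [pair_eq_dotProduct, dotProduct_add, dotProduct_smul, dotProduct_sub, hfα', hfβ']
  have hinj : Function.Injective fun n : ℕ => α + (2 * n : ℝ) • (β - α) := by
    intro n m h
    have := smul_left_injective ℝ (sub_ne_zero.mpr hne.symm) (add_left_cancel h)
    exact_mod_cast (by linarith : (n : ℝ) = m)
  exact Set.infinite_of_injective_forall_mem hinj hmem (finite_roots_pair_eq_zero hρ π hπ hf)

end LocalFiniteness

/-- an intersecting subset `𝔔′ ⊆ 𝔓` such that `B(α_P, α_Q) = a` for all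
distinct `P, Q ∈ 𝔔′` has cardinality at most `|S| + 1`. -/
theorem statement3 [Fintype B] [DecidableEq B] {M : CoxeterMatrix B}
    (cs : CoxeterSystem M W) (ρ π : W →* (B → ℝ) ≃ₗ[ℝ] (B → ℝ))
    (hρ : IsGeomRep M cs ρ) (hπ : IsContraRep ρ π)
    (a : ℝ) (Q : Set (Set (B → ℝ))) (hQP : Q ⊆ Planes ρ) (hint : Intersecting π Q)
    (ha : ∀ P ∈ Q, ∀ P' ∈ Q, P ≠ P' →
      ∀ α ∈ PhiPos ρ, ∀ β ∈ PhiPos ρ, P = hyp α → P' = hyp β → bform M α β = a) :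
    Q.Finite ∧ Q.ncard ≤ Fintype.card B + 1 := by
  have hroot : ∀ P ∈ Q, ∃ α ∈ PhiPos ρ, P = hyp α := fun P hP => hQP hP
  choose! α hα hQα using hroot
  have hinj : Set.InjOn α Q := fun P hP P' hP' h => by rw [hQα P hP, hQα P' hP', h]
  have hαα' : ∀ P ∈ Q, ∀ P' ∈ Q, α P ≠ α P' → bform M (α P) (α P') = a :=
    fun P hP P' hP' hne => ha P hP P' hP' (fun h => hne (h ▸ rfl)) _ (hα P hP) _ (hα P' hP')
      (hQα P hP) (hQα P' hP')
  by_cases ha1 : a = 1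
  · have hsub : Q.Subsingleton := fun P hP P' hP' => hinj hP hP' <| by_contra fun hne =>
      not_dcap_nonempty_of_bform_eq_one hρ π hπ (hα P hP).1 (hα P' hP').1 hne
        (ha1 ▸ hαα' P hP P' hP' hne) (hQα P hP ▸ hQα P' hP' ▸ hint P hP P' hP')
    exact ⟨hsub.finite, (Set.ncard_le_one hsub.finite).mpr hsub |>.trans (by omega)⟩
  · rw [← Set.finite_image_iff hinj, ← hinj.ncard_image,
      ← Module.finrank_fintype_fun_eq_card ℝ]
    refine finite_and_ncard_le_of_bilin_eq (bformBilin M) ha1 ?_ ?_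
    · rintro _ ⟨P, hP, rfl⟩
      rw [bformBilin_apply, bform_self_of_mem_roots hρ (hα P hP).1]
    · rintro _ ⟨P, hP, rfl⟩ _ ⟨P', hP', rfl⟩ hne
      rw [bformBilin_apply, hαα' P hP P' hP' hne]

end PaperBound
end
end

section
/- Let P, H ∈ 𝔓 and f, g ∈ U° with f, g ∉ P ∪ H. Suppose: (1) f and g lie on the same side of H (i.e., ⟨f, α_H⟩⟨g, α_H⟩ > 0); (2) P separates f and g; (3) P separates f and σ_H·f. Then g and σ_H·g lie on the same side of P (i.e., ⟨g, α_P⟩⟨σ_H·g, α_P⟩ > 0). -/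
/-! Since `σ_H` is an involution, it can be moved to the root side of the pairing, where it is
the reflection `v ↦ v - 2 B(α_i, w⁻¹ v) · w α_i`; hence `⟨σ_H x, α_P⟩ = ⟨x, α_P⟩ - c ⟨x, α_H⟩`
with `c` independent of `x`. Writing `a, b` for the pairings of `f, g` with `α_P` and `u, v` for
those with `α_H`, hypothesis (3) says `c a u > a² > 0`; as `a b < 0 < u v`, this forces
`c b v < 0`, so `b (b - c v) > 0`. -/

noncomputable section

namespace PaperBound

variable {B : Type} {W : Type} [Group W]

section Reflections

variable [Fintype B]

lemma pair_sub_smul (f u v : B → ℝ) (c : ℝ) :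
    pair f (u - c • v) = pair f u - c * pair f v :=
  show f ⬝ᵥ (u - c • v) = f ⬝ᵥ u - c * (f ⬝ᵥ v) by
    rw [dotProduct_sub, dotProduct_smul, smul_eq_mul]

lemma IsContraRep.pair_apply {ρ π : W →* (B → ℝ) ≃ₗ[ℝ] (B → ℝ)} (hπ : IsContraRep ρ π)
    (t : W) (f v : B → ℝ) : pair (π t f) v = pair f (ρ t⁻¹ v) := by
  simpa [← LinearEquiv.mul_apply, ← map_mul] using hπ t f (ρ t⁻¹ v)

variable [DecidableEq B] {M : CoxeterMatrix B} {cs : CoxeterSystem M W}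

lemma IsGeomRep.apply_conj_simple {ρ : W →* (B → ℝ) ≃ₗ[ℝ] (B → ℝ)} (hρ : IsGeomRep M cs ρ)
    (w : W) (i : B) (v : B → ℝ) :
    ρ (w * cs.simple i * w⁻¹) v = v - (2 * bform M (sroot i) (ρ w⁻¹ v)) • ρ w (sroot i) := by
  rw [map_mul, map_mul, LinearEquiv.mul_apply, LinearEquiv.mul_apply, hρ, map_sub, map_smul,
    ← LinearEquiv.mul_apply, ← map_mul, mul_inv_cancel, map_one]
  rfl

lemma pair_reflection_apply {ρ π : W →* (B → ℝ) ≃ₗ[ℝ] (B → ℝ)} (hρ : IsGeomRep M cs ρ)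
    (hπ : IsContraRep ρ π) (w : W) (i : B) (f α : B → ℝ) :
    pair (π (w * cs.simple i * w⁻¹) f) α =
      pair f α - 2 * bform M (sroot i) (ρ w⁻¹ α) * pair f (ρ w (sroot i)) := by
  have hinv : (w * cs.simple i * w⁻¹)⁻¹ = w * cs.simple i * w⁻¹ :=
    CoxeterSystem.IsReflection.inv ⟨w, i, rfl⟩
  rw [hπ.pair_apply, hinv, hρ.apply_conj_simple, pair_sub_smul]

lemma mul_sub_mul_pos_of_mul_neg {a b u v c : ℝ} (hab : a * b < 0) (huv : 0 < u * v)
    (h : a * (a - c * u) < 0) : 0 < b * (b - c * v) := by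
  have hcau : 0 < c * (a * u) := by nlinarith [sq_nonneg a]
  have hauv : (a * u) * (b * v) < 0 := by nlinarith
  have hcbv : c * (b * v) < 0 := by
    have key : c * (b * v) * (a * u) ^ 2 < 0 :=
      calc c * (b * v) * (a * u) ^ 2 = c * (a * u) * ((a * u) * (b * v)) := by ring
        _ < 0 := mul_neg_of_pos_of_neg hcau hauv
    exact neg_of_mul_neg_left key (sq_nonneg _)
  nlinarith [sq_nonneg b]

end Reflections

theorem statement10_general [Fintype B] [DecidableEq B] {M : CoxeterMatrix B}
    (cs : CoxeterSystem M W) (ρ π : W →* (B → ℝ) ≃ₗ[ℝ] (B → ℝ))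
    (hρ : IsGeomRep M cs ρ) (hπ : IsContraRep ρ π)
    (αP αH : B → ℝ)
    (w : W) (i : B) (hw : αH = ρ w (sroot i))
    (f g : B → ℝ)
    (h1 : 0 < pair f αH * pair g αH)
    (h2 : SepPt αP f g)
    (h3 : SepPt αP f (π (w * cs.simple i * w⁻¹) f)) :
    0 < pair g αP * pair (π (w * cs.simple i * w⁻¹) g) αP := by
  unfold SepPt at h2 h3
  rw [pair_reflection_apply hρ hπ, ← hw] at h3 ⊢
  exact mul_sub_mul_pos_of_mul_neg h2 h1 h3

/-- let `P = H_{α_P}`, `H = H_{α_H} ∈ 𝔓` with `α_H = w·α_i` and associated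
reflection `σ_H = w s_i w⁻¹`. If `f, g ∈ U°` lie off `P ∪ H`, on the same side of `H`,
on different sides of `P`, and `P` separates `f` from `σ_H·f`, then `g` and `σ_H·g` lie
on the same side of `P`. -/
theorem statement10 [Fintype B] [DecidableEq B] {M : CoxeterMatrix B}
    (cs : CoxeterSystem M W) (ρ π : W →* (B → ℝ) ≃ₗ[ℝ] (B → ℝ))
    (hρ : IsGeomRep M cs ρ) (hπ : IsContraRep ρ π)
    (αP αH : B → ℝ) (hαP : αP ∈ PhiPos ρ) (hαH : αH ∈ PhiPos ρ)
    (w : W) (i : B) (hw : αH = ρ w (sroot i))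
    (f g : B → ℝ)
    (hf : f ∈ interior (titsCone π)) (hg : g ∈ interior (titsCone π))
    (hf' : f ∉ hyp αP ∪ hyp αH) (hg' : g ∉ hyp αP ∪ hyp αH)
    (h1 : 0 < pair f αH * pair g αH)
    (h2 : SepPt αP f g)
    (h3 : SepPt αP f (π (w * cs.simple i * w⁻¹) f)) :
    0 < pair g αP * pair (π (w * cs.simple i * w⁻¹) g) αP :=
  statement10_general cs ρ π hρ hπ αP αH w i hw f g h1 h2 h3

end PaperBound
end
end
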